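/- Let N = l^n with integers l > 2 and n ≥ 3. Then the tuple of size 2l^{n−1} − 4l^{n−2} + 2 over ℤ/Nℤ whose first and last entries equal 2l^{n−1} mod N and all of whose other entries equal l mod N is a solution of (E_N). -/

import Mathlib

open Matrix

/-- `Mmat [a₁, …, aₙ]` is the product `[[aₙ,-1],[1,0]] ⋯ [[a₁,-1],[1,0]]`. -/
def Mmat {R : Type*} [CommRing R] : List R → Matrix (Fin 2) (Fin 2) R
  | [] => 1
  | a :: t => Mmat t * !![a, -1; 1, 0]

/-- A tuple is a solution of (E_N) if its matrix is `Id` or `-Id`. -/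
def IsSolution {R : Type*} [CommRing R] (l : List R) : Prop :=
  Mmat l = 1 ∨ Mmat l = -1

/-- The sum `(a₁,…,aₙ) ⊕ (b₁,…,bₘ) = (a₁+bₘ, a₂,…,aₙ₋₁, aₙ+b₁, b₂,…,bₘ₋₁)`. -/
def oplus {R : Type*} [CommRing R] (a b : List R) : List R :=
  List.ofFn (fun i : Fin (a.length + b.length - 2) =>
    if (i : ℕ) = 0 then a.getD 0 0 + b.getD (b.length - 1) 0
    else if (i : ℕ) < a.length - 1 then a.getD (i : ℕ) 0
    else if (i : ℕ) = a.length - 1 then a.getD (a.length - 1) 0 + b.getD 0 0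
    else b.getD ((i : ℕ) - a.length + 1) 0)

/-- Two tuples are equivalent if one is a cyclic permutation of the other or of
its reversal. -/
def TupleEquiv {R : Type*} (a b : List R) : Prop :=
  (∃ k, b = a.rotate k) ∨ (∃ k, b = a.reverse.rotate k)

/-- A solution `c` (of size ≥ 3) is reducible if `c ∼ a ⊕ b` with `b` a solution,
`a` of size ≥ 3 and `b` of size ≥ 3. -/
def Reducible {R : Type*} [CommRing R] (c : List R) : Prop :=
  ∃ a b : List R, 3 ≤ a.length ∧ 3 ≤ b.length ∧ IsSolution b ∧
    TupleEquiv c (oplus a b)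

/-- The alternating tuple `(k, -k, k, -k, …)` of length `n`. -/
def altList {R : Type*} [CommRing R] (n : ℕ) (k : R) : List R :=
  List.ofFn (fun i : Fin n => if (i : ℕ) % 2 = 0 then k else -k)

/-- Continuants: `K₋₁ = 0`, `K₀ = 1`,
`Kₙ(x₁,…,xₙ) = x₁·Kₙ₋₁(x₂,…,xₙ) - Kₙ₋₂(x₃,…,xₙ)`. -/
def contK {R : Type*} [CommRing R] : List R → R
  | [] => 1
  | [x] => x
  | x :: y :: t => x * contK (y :: t) - contK t

/-!
Write `A = [[l, -1], [1, 0]]` and `a = 2 l^(n-1)`; the matrix of the tuple is `M_a A^m M_a` with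
`m = 2 (l - 2) l^(n-2)`. In the commutative ring generated by `A` we have `A² = l A - 1`, hence
`A^(2k) ≡ (-1)^k (1 - k l A) mod l²` and in particular `A^(2(l-2)) ≡ (-1)^l (1 + 2 l A) mod l²`.
Each further `l`-th power gains one factor of `l` (`l^(j+1) ∣ x - y ⇒ l^(j+2) ∣ x^l - y^l`, and
`(1 + 2 l^(j+1) A)^l ≡ 1 + 2 l^(j+2) A mod l^(j+3)`), so `A^m = (-1)^l (1 + a A)` over `ℤ/l^nℤ`.
Finally `a l = a² = 0` there, which makes `M_a (1 + a A) M_a = -Id`.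
-/

section Congruences

variable {S : Type*} [CommRing S]

theorem pow_add_two_dvd_pow_sub_pow {a b : S} {l j : ℕ} (h : (l : S) ^ (j + 1) ∣ a - b) :
    (l : S) ^ (j + 2) ∣ a ^ l - b ^ l := by
  rw [← geom_sum₂_mul, pow_succ' _ (j + 1)]
  exact mul_dvd_mul (dvd_geom_sum₂_self ((dvd_pow_self _ j.succ_ne_zero).trans h)) h

theorem pow_three_dvd_one_add_pow_sub (x : S) (m : ℕ) :
    x ^ 3 ∣ (1 + x) ^ m - (1 + m * x + m.choose 2 * x ^ 2) := by
  induction m with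
  | zero => simp
  | succ m ih =>
    obtain ⟨e, he⟩ := ih
    refine ⟨(1 + x) * e + m.choose 2, ?_⟩
    rw [Nat.choose_succ_succ, Nat.choose_one_right, pow_succ,
      sub_eq_iff_eq_add.mp he]
    push_cast
    ring

theorem pow_add_three_dvd_one_add_two_mul_pow_pow_sub (l j : ℕ) (w : S) :
    (l : S) ^ (j + 3) ∣ (1 + 2 * l ^ (j + 1) * w) ^ l - (1 + 2 * l ^ (j + 2) * w) := by
  obtain ⟨e, he⟩ := pow_three_dvd_one_add_pow_sub (2 * (l : S) ^ (j + 1) * w) l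
  -- `l ∣ 2 * choose l 2` makes the quadratic term vanish modulo `l ^ (j + 3)`
  have hchoose : l ∣ l.choose 2 * 2 := by
    rcases l with _ | k
    · simp
    · exact ⟨k, by rw [← Nat.add_one_mul_choose_eq, Nat.choose_one_right]⟩
  obtain ⟨c, hc⟩ := Nat.cast_dvd_cast (α := S) hchoose
  push_cast at hc
  rw [sub_eq_iff_eq_add.mp he]
  refine ⟨2 * l ^ j * c * w ^ 2 + 8 * l ^ (2 * j) * w ^ 3 * e, ?_⟩
  linear_combination (2 * (l : S) ^ (2 * j + 2) * w ^ 2) * hc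

variable {l : ℕ} {α : S}

theorem sq_dvd_pow_two_mul_sub (hα : α ^ 2 = l * α - 1) (k : ℕ) :
    (l : S) ^ 2 ∣ α ^ (2 * k) - (-1) ^ k * (1 - k * l * α) := by
  induction k with
  | zero => simp
  | succ k ih =>
    obtain ⟨c, hc⟩ := ih
    refine ⟨(-1) ^ (k + 1) * k * α ^ 2 + c * α ^ 2, ?_⟩
    rw [mul_add_one, pow_add, sub_eq_iff_eq_add.mp hc]
    push_cast
    linear_combination (-1) ^ k * (1 - k * l * α) * hα

theorem pow_dvd_pow_two_mul_pow_sub (hl : 2 ≤ l) (hα : α ^ 2 = l * α - 1) (j : ℕ) :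
    (l : S) ^ (j + 2) ∣ α ^ (2 * (l - 2) * l ^ j) - (-1) ^ l * (1 + 2 * l ^ (j + 1) * α) := by
  induction j with
  | zero =>
    obtain ⟨c, hc⟩ := sq_dvd_pow_two_mul_sub hα (l - 2)
    obtain ⟨k, rfl⟩ := Nat.exists_eq_add_of_le' hl
    refine ⟨c - (-1) ^ k * α, ?_⟩
    rw [pow_zero, mul_one, sub_eq_iff_eq_add.mp hc, Nat.add_sub_cancel]
    push_cast
    ring
  | succ j ih =>
    rw [pow_succ l j, ← mul_assoc, pow_mul]
    have hsign : ((-1 : S) ^ l) ^ l = (-1) ^ l := by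
      rcases neg_one_pow_eq_or S l with h | h <;> simp [h]
    convert dvd_add (pow_add_two_dvd_pow_sub_pow ih)
      ((pow_add_three_dvd_one_add_two_mul_pow_pow_sub l j α).mul_left ((-1 : S) ^ l)) using 1
    rw [mul_pow, hsign]
    ring

end Congruences

section Matrices

variable {R : Type*} [CommRing R]

theorem Mmat_singleton (x : R) : Mmat [x] = !![x, -1; 1, 0] :=
  one_mul _

theorem Mmat_append (s t : List R) : Mmat (s ++ t) = Mmat t * Mmat s := by
  induction s with
  | nil => simp [Mmat]
  | cons a s ih => simp only [List.cons_append, Mmat, ih, mul_assoc]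

theorem Mmat_replicate (m : ℕ) (x : R) : Mmat (List.replicate m x) = Mmat [x] ^ m := by
  induction m with
  | zero => rfl
  | succ m ih => rw [List.replicate_succ, Mmat, ih, pow_succ, Mmat_singleton]

theorem Mmat_cons_replicate_append_singleton (a x b : R) (m : ℕ) :
    Mmat (a :: (List.replicate m x ++ [b])) = Mmat [b] * Mmat [x] ^ m * Mmat [a] := by
  rw [Mmat, Mmat_append, Mmat_replicate, Mmat_singleton a]

theorem Mmat_singleton_sq (x : R) : Mmat [x] ^ 2 = x • Mmat [x] - 1 := by
  rw [Mmat_singleton, sq, Matrix.one_fin_two]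
  ext i j
  fin_cases i <;> fin_cases j <;> simp [sub_eq_add_neg]

theorem Mmat_singleton_mul_one_add_smul_mul {x y : R} (hxy : x * y = 0) (hxx : x * x = 0) :
    Mmat [x] * (1 + x • Mmat [y]) * Mmat [x] = -1 := by
  rw [Mmat_singleton, Mmat_singleton, Matrix.one_fin_two]
  ext i j
  fin_cases i <;> fin_cases j <;> simp [hxy, hxx]

open scoped IsMulCommutative in
theorem Mmat_singleton_natCast_pow {l j : ℕ} (hl : 2 ≤ l) (h : (l : R) ^ (j + 2) = 0) :
    Mmat [(l : R)] ^ (2 * (l - 2) * l ^ j) =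
      (-1) ^ l * (1 + (2 * (l : R) ^ (j + 1)) • Mmat [(l : R)]) := by
  set A := Mmat [(l : R)]
  let α : Algebra.adjoin R {A} := ⟨A, Algebra.self_mem_adjoin_singleton R A⟩
  have hα : α ^ 2 = l * α - 1 := Subtype.ext (by
    push_cast
    rw [← nsmul_eq_mul, ← Nat.cast_smul_eq_nsmul R]
    exact Mmat_singleton_sq (l : R))
  have hl_nilp : (l : Algebra.adjoin R {A}) ^ (j + 2) = 0 := by
    rw [← map_natCast (algebraMap R _), ← map_pow, h, map_zero]
  obtain ⟨c, hc⟩ := pow_dvd_pow_two_mul_pow_sub hl hα j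
  rw [hl_nilp, zero_mul, sub_eq_zero,
    show 2 * (l : Algebra.adjoin R {A}) ^ (j + 1) * α = (2 * (l : R) ^ (j + 1)) • α by
      rw [Algebra.smul_def, map_mul, map_pow, map_natCast, map_ofNat]] at hc
  simpa using congrArg Subtype.val hc

end Matrices

theorem two_mul_pow_succ_sub_four_mul_pow (l j : ℕ) :
    2 * l ^ (j + 1) - 4 * l ^ j = 2 * (l - 2) * l ^ j := by
  rw [Nat.mul_sub, Nat.sub_mul, pow_succ]
  ring_nf

theorem special_tuple_solution (l n : ℕ) (hl : 2 < l) (hn : 3 ≤ n) :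
    IsSolution
      (((2 * l ^ (n - 1) : ℕ) : ZMod (l ^ n)) ::
        (List.replicate (2 * l ^ (n - 1) - 4 * l ^ (n - 2)) ((l : ℕ) : ZMod (l ^ n)) ++
          [((2 * l ^ (n - 1) : ℕ) : ZMod (l ^ n))])) := by
  obtain ⟨j, rfl⟩ := Nat.exists_eq_add_of_le' (by omega : 2 ≤ n)
  have hl_nilp : (l : ZMod (l ^ (j + 2))) ^ (j + 2) = 0 := by
    rw [← Nat.cast_pow, ZMod.natCast_self]
  have hsandwich := Mmat_singleton_mul_one_add_smul_mul
    (x := 2 * (l : ZMod (l ^ (j + 2))) ^ (j + 1)) (y := l)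
    (by linear_combination 2 * hl_nilp) (by linear_combination 4 * (l : ZMod _) ^ j * hl_nilp)
  rw [Nat.add_sub_cancel, show j + 2 - 1 = j + 1 by omega, two_mul_pow_succ_sub_four_mul_pow,
    IsSolution, Mmat_cons_replicate_append_singleton, Mmat_singleton_natCast_pow hl.le hl_nilp]
  push_cast
  rcases neg_one_pow_eq_or (Matrix (Fin 2) (Fin 2) (ZMod (l ^ (j + 2)))) l with h | h <;> rw [h]
  · exact Or.inr (by rwa [one_mul])
  · exact Or.inl (by rw [neg_one_mul, mul_neg, neg_mul, hsandwich, neg_neg])
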